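/- Let f : ℝⁿ → ℝ be convex and differentiable with minimizer X⋆, let r > 3, and let X be a twice differentiable solution of 0 = Ẍ + (r/t)Ẋ + ∇f(X) on (0,∞) with X(t) → X₀, Ẋ(t) → 0 as t → 0⁺. Then for all t > 0, f(X(t)) − f⋆ ≤ (r − 1)‖X₀ − X⋆‖²/t². -/

import Mathlib

open Filter MeasureTheory
open scoped RealInnerProductSpace Topology

/-!
The energy `E(t) = 2t²(f(X) - f(X⋆)) + ‖2(X - X⋆) + tẊ‖² + 2(r - 3)‖X - X⋆‖²` is nonincreasing
along the trajectory: by the ODE its derivative is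
`4t(f(X) - f(X⋆) - ⟪∇f(X), X - X⋆⟫) - 2(r - 3)t‖Ẋ‖²`, and both terms are nonpositive by convexity
and `r ≥ 3`. Hence `2t²(f(X(t)) - f(X⋆)) ≤ E(t) ≤ E(0⁺) = 2(r - 1)‖X₀ - X⋆‖²`.
-/

theorem AntitoneOn.le_of_tendsto_nhdsGT {u : ℝ → ℝ} {a L t : ℝ} (hu : AntitoneOn u (Set.Ioi a))
    (hL : Tendsto u (𝓝[>] a) (𝓝 L)) (ht : a < t) : u t ≤ L :=
  ge_of_tendsto hL <| mem_of_superset (Ioo_mem_nhdsGT ht) fun _ hc => hu hc.1 ht hc.2.le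

section

variable {E : Type*} [NormedAddCommGroup E] [InnerProductSpace ℝ E]

noncomputable def agmEnergy (f : E → ℝ) (r : ℝ) (Xs : E) (X X' : ℝ → E) (t : ℝ) : ℝ :=
  2 * t ^ 2 * (f (X t) - f Xs) + ‖(2 : ℝ) • (X t - Xs) + t • X' t‖ ^ 2
    + 2 * (r - 3) * ‖X t - Xs‖ ^ 2

variable {f : E → ℝ} {r : ℝ} {Xs : E} {X X' : ℝ → E}

theorem HasGradientAt.comp_hasDerivAt [CompleteSpace E] {g x' : E} {t : ℝ}
    (hf : HasGradientAt f g (X t)) (hX : HasDerivAt X x' t) :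
    HasDerivAt (fun s => f (X s)) ⟪g, x'⟫ t := by
  have h := hf.hasFDerivAt.comp_hasDerivAt t hX
  simp only [InnerProductSpace.toDual_apply_apply] at h
  exact h

theorem hasDerivAt_agmEnergy [CompleteSpace E] {g : E → E} {X'' : ℝ → E} {t : ℝ}
    (hf : HasGradientAt f (g (X t)) (X t)) (hX : HasDerivAt X (X' t) t)
    (hX' : HasDerivAt X' (X'' t) t) (hODE : X'' t + (r / t) • X' t + g (X t) = 0)
    (ht : t ≠ 0) :
    HasDerivAt (agmEnergy f r Xs X X')
      (4 * t * (f (X t) - f Xs - ⟪g (X t), X t - Xs⟫) - 2 * (r - 3) * t * ‖X' t‖ ^ 2) t := by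
  have hY : HasDerivAt (fun s => X s - Xs) (X' t) t := hX.sub_const Xs
  have hW : HasDerivAt (fun s => (2 : ℝ) • (X s - Xs) + s • X' s)
      ((2 : ℝ) • X' t + (t • X'' t + (1 : ℝ) • X' t)) t :=
    (hY.const_smul 2).add ((hasDerivAt_id t).smul hX')
  have hW' : (2 : ℝ) • X' t + (t • X'' t + (1 : ℝ) • X' t) = (3 - r) • X' t - t • g (X t) := by
    have hX'' : t • X'' t = -(r • X' t) - t • g (X t) := by
      have h := congrArg (t • ·) hODE
      simp only [smul_add, smul_smul, mul_div_cancel₀ r ht, smul_zero] at h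
      linear_combination (norm := module) h
    rw [hX'']; module
  have := ((((hasDerivAt_pow 2 t).const_mul 2).mul
    ((hf.comp_hasDerivAt hX).sub_const (f Xs))).add hW.norm_sq).add
    (hY.norm_sq.const_mul (2 * (r - 3)))
  refine this.congr_deriv ?_
  rw [hW']
  simp only [inner_add_left, inner_sub_left, inner_sub_right, real_inner_smul_left,
    real_inner_smul_right, real_inner_self_eq_norm_sq, real_inner_comm (X' t)]
  rw [real_inner_comm (g (X t)) (X t), real_inner_comm (g (X t)) Xs]
  ring

theorem antitoneOn_agmEnergy [CompleteSpace E] {g : E → E} {X'' : ℝ → E}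
    (hgrad : ∀ x, HasGradientAt f (g x) x) (hconv : ∀ x, f x - f Xs ≤ ⟪g x, x - Xs⟫)
    (hr : 3 ≤ r) (hX' : ∀ t ∈ Set.Ioi (0 : ℝ), HasDerivAt X (X' t) t)
    (hX'' : ∀ t ∈ Set.Ioi (0 : ℝ), HasDerivAt X' (X'' t) t)
    (hODE : ∀ t ∈ Set.Ioi (0 : ℝ), X'' t + (r / t) • X' t + g (X t) = 0) :
    AntitoneOn (agmEnergy f r Xs X X') (Set.Ioi 0) := by
  have hE : ∀ t ∈ Set.Ioi (0 : ℝ), HasDerivAt (agmEnergy f r Xs X X')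
      (4 * t * (f (X t) - f Xs - ⟪g (X t), X t - Xs⟫) - 2 * (r - 3) * t * ‖X' t‖ ^ 2) t :=
    fun t ht => hasDerivAt_agmEnergy (hgrad _) (hX' t ht) (hX'' t ht) (hODE t ht) ht.ne'
  refine antitoneOn_of_deriv_nonpos (convex_Ioi 0)
    (fun t ht => (hE t ht).continuousAt.continuousWithinAt) ?_ ?_ <;> rw [interior_Ioi]
  · exact fun t ht => (hE t ht).differentiableAt.differentiableWithinAt
  · intro t (ht : 0 < t)
    rw [(hE t ht).deriv]
    have hgap := hconv (X t)
    have hr' : 0 ≤ r - 3 := sub_nonneg.2 hr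
    nlinarith [mul_nonneg (mul_nonneg hr' ht.le) (sq_nonneg ‖X' t‖)]

theorem tendsto_agmEnergy_nhdsGT_zero {X₀ : E} (hf : ContinuousAt f X₀)
    (hX0 : Tendsto X (𝓝[>] 0) (𝓝 X₀)) (hXd0 : Tendsto X' (𝓝[>] 0) (𝓝 0)) :
    Tendsto (agmEnergy f r Xs X X') (𝓝[>] 0) (𝓝 (2 * (r - 1) * ‖X₀ - Xs‖ ^ 2)) := by
  have hid : Tendsto (fun s : ℝ => s) (𝓝[>] 0) (𝓝 0) := nhdsWithin_le_nhds
  have hY := hX0.sub_const Xs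
  have h := ((((hid.pow 2).const_mul 2).mul ((hf.tendsto.comp hX0).sub_const (f Xs))).add
    (((hY.const_smul (2 : ℝ)).add (hid.smul hXd0)).norm.pow 2)).add
    ((hY.norm.pow 2).const_mul (2 * (r - 3)))
  convert h using 2
  · rfl
  rw [smul_zero, add_zero, norm_smul, Real.norm_two]
  ring

theorem two_mul_sq_mul_sub_le_agmEnergy (hr : 3 ≤ r) (t : ℝ) :
    2 * t ^ 2 * (f (X t) - f Xs) ≤ agmEnergy f r Xs X X' t := by
  have hr' : 0 ≤ r - 3 := sub_nonneg.2 hr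
  unfold agmEnergy
  nlinarith [sq_nonneg ‖(2 : ℝ) • (X t - Xs) + t • X' t‖, mul_nonneg hr' (sq_nonneg ‖X t - Xs‖)]

end

theorem agm_ode_rate_r_gt3_general
    {E : Type*} [NormedAddCommGroup E] [InnerProductSpace ℝ E] [CompleteSpace E]
    (f : E → ℝ) (g : E → E)
    (hgrad : ∀ x, HasGradientAt f (g x) x)
    (hconv : ∀ x y, 0 ≤ f x - f y - ⟪g y, x - y⟫)
    (r : ℝ) (hr : 3 < r)
    (X X' X'' : ℝ → E)
    (hX' : ∀ t ∈ Set.Ioi (0:ℝ), HasDerivAt X (X' t) t)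
    (hX'' : ∀ t ∈ Set.Ioi (0:ℝ), HasDerivAt X' (X'' t) t)
    (hODE : ∀ t ∈ Set.Ioi (0:ℝ), X'' t + (r / t) • X' t + g (X t) = 0)
    (X₀ : E) (hX0 : Tendsto X (𝓝[>] (0:ℝ)) (𝓝 X₀))
    (hXd0 : Tendsto X' (𝓝[>] (0:ℝ)) (𝓝 0))
    (Xs : E) :
    ∀ t > (0:ℝ), f (X t) - f Xs ≤ (r - 1) * ‖X₀ - Xs‖ ^ 2 / t ^ 2 := by
  intro t ht
  have hgap : ∀ x, f x - f Xs ≤ ⟪g x, x - Xs⟫ := fun x => by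
    have h := hconv Xs x
    rw [← neg_sub x Xs, inner_neg_right] at h
    linarith
  have hE := (antitoneOn_agmEnergy hgrad hgap hr.le hX' hX'' hODE).le_of_tendsto_nhdsGT
    (tendsto_agmEnergy_nhdsGT_zero (hgrad X₀).continuousAt hX0 hXd0) ht
  have hlow : 2 * t ^ 2 * (f (X t) - f Xs) ≤ agmEnergy f r Xs X X' t :=
    two_mul_sq_mul_sub_le_agmEnergy hr.le t
  rw [le_div_iff₀ (by positivity)]
  linarith

theorem agm_ode_rate_r_gt3
    {E : Type*} [NormedAddCommGroup E] [InnerProductSpace ℝ E] [CompleteSpace E]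
    (f : E → ℝ) (g : E → E)
    (hgrad : ∀ x, HasGradientAt f (g x) x)
    (hconv : ∀ x y, 0 ≤ f x - f y - ⟪g y, x - y⟫)
    (r : ℝ) (hr : 3 < r)
    (X X' X'' : ℝ → E)
    (hX' : ∀ t ∈ Set.Ioi (0:ℝ), HasDerivAt X (X' t) t)
    (hX'' : ∀ t ∈ Set.Ioi (0:ℝ), HasDerivAt X' (X'' t) t)
    (hODE : ∀ t ∈ Set.Ioi (0:ℝ), X'' t + (r / t) • X' t + g (X t) = 0)
    (X₀ : E) (hX0 : Tendsto X (𝓝[>] (0:ℝ)) (𝓝 X₀))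
    (hXd0 : Tendsto X' (𝓝[>] (0:ℝ)) (𝓝 0))
    (Xs : E) (hmin : ∀ x, f Xs ≤ f x) :
    ∀ t > (0:ℝ), f (X t) - f Xs ≤ (r - 1) * ‖X₀ - Xs‖ ^ 2 / t ^ 2 :=
  agm_ode_rate_r_gt3_general f g hgrad hconv r hr X X' X'' hX' hX'' hODE X₀ hX0 hXd0 Xs
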